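/- Let H be a separable complex Hilbert space and T a bounded linear operator on H. If the set {ζ ∈ ℂ : |ζ| = 1 and ζ is an eigenvalue of the adjoint T*} is uncountable, then T does not have an isometric asymptote. -/

import Mathlib

noncomputable section

open ContinuousLinearMap

/-- A bounded operator `V` is an isometry. -/
def IsIsometryOp {K : Type} [NormedAddCommGroup K] [InnerProductSpace ℂ K]
    (V : K →L[ℂ] K) : Prop :=
  ∀ x, ‖V x‖ = ‖x‖

/-- `(X, V)` is an isometric asymptote of `T` : `V` is an isometry, `X` intertwines `T` with `V`,
`X` has dense range, and the pair has the universal property with respect to all pairs `(Y, W)`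
with `W` an isometry on a Hilbert space and `Y T = W Y`. -/
def IsIsometricAsymptote {H : Type} [NormedAddCommGroup H] [InnerProductSpace ℂ H]
    [CompleteSpace H] (T : H →L[ℂ] H)
    (K : Type) [NormedAddCommGroup K] [InnerProductSpace ℂ K] [CompleteSpace K]
    (X : H →L[ℂ] K) (V : K →L[ℂ] K) : Prop :=
  IsIsometryOp V ∧ DenseRange X ∧ X.comp T = V.comp X ∧
    ∀ (K' : Type) [NormedAddCommGroup K'] [InnerProductSpace ℂ K'] [CompleteSpace K']
      (W : K' →L[ℂ] K') (Y : H →L[ℂ] K'), IsIsometryOp W → Y.comp T = W.comp Y →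
      ∃! Z : K →L[ℂ] K', Z.comp V = W.comp Z ∧ Y = Z.comp X

lemma conj_mul_self_one {ζ : ℂ} (h : ‖ζ‖ = 1) : (starRingEnd ℂ ζ) * ζ = 1 := by
  rw [mul_comm, Complex.mul_conj, Complex.normSq_eq_norm_sq, h]
  norm_num


/-- If the set of peripheral eigenvalues of `T*` is uncountable, then `T` has no isometric
asymptote. -/
theorem no_isometric_asymptote_of_uncountable_peripheral_point_spectrum
    {H : Type} [NormedAddCommGroup H] [InnerProductSpace ℂ H] [CompleteSpace H]
    [TopologicalSpace.SeparableSpace H] (T : H →L[ℂ] H)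
    (huncount : ¬ Set.Countable
      {ζ : ℂ | ‖ζ‖ = 1 ∧ ∃ x : H, x ≠ 0 ∧ ContinuousLinearMap.adjoint T x = ζ • x}) :
    ¬ ∃ (K : Type) (_ : NormedAddCommGroup K) (_ : InnerProductSpace ℂ K) (_ : CompleteSpace K)
      (X : H →L[ℂ] K) (V : K →L[ℂ] K), IsIsometricAsymptote T K X V := by
  rintro ⟨K, iK1, iK2, iK3, X, V, hV, hX, hXT, huniv⟩
  apply huncount
  set S : Set ℂ := {ζ : ℂ | ‖ζ‖ = 1 ∧ ∃ x : H, x ≠ 0 ∧ ContinuousLinearMap.adjoint T x = ζ • x}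
    with hS
  haveI : TopologicalSpace.SeparableSpace K := hX.separableSpace X.continuous
  -- for each peripheral eigenvalue of T*, produce an eigenvector of V
  have key : ∀ ζ ∈ S, ∃ y : K, y ≠ 0 ∧ V y = (starRingEnd ℂ ζ) • y := by
    rintro ζ ⟨hζ1, x, hx0, hx⟩
    set W : ℂ →L[ℂ] ℂ := (starRingEnd ℂ ζ) • (ContinuousLinearMap.id ℂ ℂ) with hW
    have hWiso : IsIsometryOp W := by
      intro a
      simp [hW, norm_smul, hζ1]
    set Y : H →L[ℂ] ℂ := innerSL ℂ x with hY
    have hYT : Y.comp T = W.comp Y := by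
      ext h
      simp only [hY, hW, ContinuousLinearMap.comp_apply, innerSL_apply_apply,
        ContinuousLinearMap.smul_apply, ContinuousLinearMap.id_apply, smul_eq_mul]
      rw [← ContinuousLinearMap.adjoint_inner_left, hx, inner_smul_left]
    obtain ⟨Z, ⟨hZV, hZX⟩, -⟩ := huniv ℂ W Y hWiso hYT
    refine ⟨ContinuousLinearMap.adjoint Z 1, ?_, ?_⟩
    · intro h0
      apply hx0
      have hZ0 : ∀ k : K, Z k = 0 := by
        intro k
        have : (inner ℂ (ContinuousLinearMap.adjoint Z 1) k : ℂ) = Z k := by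
          rw [ContinuousLinearMap.adjoint_inner_left]
          simp [RCLike.inner_apply]
        rw [h0] at this
        simpa using this.symm
      have : (inner ℂ x x : ℂ) = 0 := by
        have := congrArg (fun f => f x) hZX
        simpa [hY, hZ0] using this
      exact inner_self_eq_zero.mp this
    · -- V y = conj ζ • y
      set y : K := ContinuousLinearMap.adjoint Z 1 with hy
      have hyk : ∀ k : K, (inner ℂ y k : ℂ) = Z k := by
        intro k
        rw [hy, ContinuousLinearMap.adjoint_inner_left]
        simp [RCLike.inner_apply]
      have hZVk : ∀ k : K, Z (V k) = (starRingEnd ℂ ζ) * Z k := by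
        intro k
        have := congrArg (fun f => f k) hZV
        simpa [hW] using this
      have hyVy : (inner ℂ y (V y) : ℂ) = (starRingEnd ℂ ζ) * (‖y‖ : ℂ) ^ 2 := by
        rw [hyk, hZVk, ← hyk, inner_self_eq_norm_sq_to_K]
        norm_num
      have hnorm : ‖V y - (starRingEnd ℂ ζ) • y‖ ^ 2 = 0 := by
        rw [@norm_sub_sq ℂ]
        have h1 : ‖V y‖ = ‖y‖ := hV y
        have h2 : ‖(starRingEnd ℂ ζ) • y‖ = ‖y‖ := by
          rw [norm_smul]; simp [hζ1]
        have h3 : (inner ℂ (V y) ((starRingEnd ℂ ζ) • y) : ℂ) = (‖y‖ : ℂ) ^ 2 := by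
          rw [inner_smul_right]
          have : (inner ℂ (V y) y : ℂ) = starRingEnd ℂ (inner ℂ y (V y) : ℂ) := by
            rw [← inner_conj_symm]
          rw [this, hyVy]
          simp only [map_mul, map_pow, Complex.conj_ofReal, starRingEnd_self_apply]
          rw [← mul_assoc, conj_mul_self_one hζ1, one_mul]
        rw [h1, h2, h3]
        simp [← Complex.ofReal_pow]
        ring
      have := pow_eq_zero_iff (n := 2) (by norm_num) |>.mp hnorm
      rw [norm_eq_zero, sub_eq_zero] at this
      exact this
  choose! y hy0 hyV using key
  -- normalized eigenvectors
  set u : ℂ → K := fun ζ => (‖y ζ‖ : ℂ)⁻¹ • y ζ with hu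
  have hu_norm : ∀ ζ ∈ S, ‖u ζ‖ = 1 := by
    intro ζ hζ
    have h0 : ‖y ζ‖ ≠ 0 := norm_ne_zero_iff.mpr (hy0 ζ hζ)
    simp [hu, norm_smul, h0]
  have hVi : ∀ a b : K, (inner ℂ (V a) (V b) : ℂ) = inner ℂ a b := by
    intro a b
    exact LinearIsometry.inner_map_map ⟨(V : K →ₗ[ℂ] K), hV⟩ a b
  have hy_orth : ∀ ζ₁ ∈ S, ∀ ζ₂ ∈ S, ζ₁ ≠ ζ₂ → (inner ℂ (y ζ₁) (y ζ₂) : ℂ) = 0 := by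
    intro ζ₁ h₁ ζ₂ h₂ hne
    by_contra hinner
    have h1 := hVi (y ζ₁) (y ζ₂)
    rw [hyV ζ₁ h₁, hyV ζ₂ h₂] at h1
    simp only [inner_smul_left, inner_smul_right, starRingEnd_self_apply, ← mul_assoc] at h1
    have h2' : ((starRingEnd ℂ) ζ₂ * ζ₁ - 1) * inner ℂ (y ζ₁) (y ζ₂) = 0 := by
      rw [sub_mul, one_mul, h1, sub_self]
    have h2 : ζ₁ * (starRingEnd ℂ ζ₂) = 1 := by
      rcases mul_eq_zero.mp h2' with h3 | h3
      · rw [mul_comm]; exact sub_eq_zero.mp h3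
      · exact absurd h3 hinner
    apply hne
    have hζ₂ : (starRingEnd ℂ ζ₂) * ζ₂ = 1 := conj_mul_self_one h₂.1
    calc ζ₁ = ζ₁ * ((starRingEnd ℂ ζ₂) * ζ₂) := by rw [hζ₂, mul_one]
    _ = (ζ₁ * starRingEnd ℂ ζ₂) * ζ₂ := by ring
    _ = ζ₂ := by rw [h2, one_mul]
  have hu_orth : ∀ ζ₁ ∈ S, ∀ ζ₂ ∈ S, ζ₁ ≠ ζ₂ → (inner ℂ (u ζ₁) (u ζ₂) : ℂ) = 0 := by
    intro ζ₁ h₁ ζ₂ h₂ hne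
    simp [hu, inner_smul_left, inner_smul_right, hy_orth ζ₁ h₁ ζ₂ h₂ hne]
  have hdist : ∀ ζ₁ ∈ S, ∀ ζ₂ ∈ S, ζ₁ ≠ ζ₂ → 1 ≤ dist (u ζ₁) (u ζ₂) := by
    intro ζ₁ h₁ ζ₂ h₂ hne
    have h2 : dist (u ζ₁) (u ζ₂) ^ 2 = 2 := by
      rw [dist_eq_norm, @norm_sub_sq ℂ, hu_norm ζ₁ h₁, hu_norm ζ₂ h₂, hu_orth ζ₁ h₁ ζ₂ h₂ hne]
      norm_num
    nlinarith [dist_nonneg (x := u ζ₁) (y := u ζ₂)]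
  obtain ⟨D, hDc, hDd⟩ := TopologicalSpace.exists_countable_dense K
  have hch : ∀ ζ : ℂ, ∃ d ∈ D, dist (u ζ) d < 1/2 := by
    intro ζ
    obtain ⟨d, hd, hdd⟩ := hDd.exists_dist_lt (u ζ) (by norm_num : (0:ℝ) < 1/2)
    exact ⟨d, hd, hdd⟩
  choose f hfD hfd using hch
  have hinj : Set.InjOn f S := by
    intro ζ₁ h₁ ζ₂ h₂ hf
    by_contra hne
    have := hdist ζ₁ h₁ ζ₂ h₂ hne
    have h3 : dist (u ζ₁) (u ζ₂) ≤ dist (u ζ₁) (f ζ₁) + dist (f ζ₂) (u ζ₂) := by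
      rw [hf]
      exact dist_triangle _ _ _
    have h4 := hfd ζ₁
    have h5 := hfd ζ₂
    rw [dist_comm] at h5
    linarith
  exact Set.countable_of_injective_of_countable_image hinj
    (Set.Countable.mono (Set.image_subset_iff.mpr fun ζ _ => hfD ζ) hDc)
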